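/- arXiv:1706.08253 — 2 statements merged into one kernel-verified Lean document; each statement's English description precedes it below -/
import Mathlib

section
/- Let μ be a finite Borel measure on ℝ^n with compact support, let Ω_1,…,Ω_p be closed subsets of ℝ^n with union Ω := ⋃_{i=1}^p Ω_i, and let f : ℝ^n → ℝ be continuous with f > 0 μ-almost everywhere on Ω. Consider the problem Q: maximize Σ_{i=1}^p ∫ f dφ_i over all p-tuples (φ_1,…,φ_p) of finite Borel measures satisfying φ_i(ℝ^n ∖ Ω_i) = 0 for each i and Σ_{i=1}^p φ_i ≤ μ. Then Q has an optimal solution, its optimal value equals ∫_Ω f dμ, and every optimal solution (φ*_1,…,φ*_p) satisfies Σ_{i=1}^p φ*_i = μ_Ω, the restriction of μ to Ω. -/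
/-!
Every admissible tuple `φ` has `∑ φ i` carried by `Ω = ⋃ Ω i` and below `μ`, hence
`∑ φ i ≤ μ_Ω`, so its value `∫ f d(∑ φ i)` is at most `∫_Ω f dμ` because `f > 0` on `Ω`.
Equality forces `∫ f d(μ_Ω - ∑ φ i) = 0` with a positive integrand, i.e. `∑ φ i = μ_Ω`.
The bound is attained by restricting `μ` to the disjointed pieces `Ω i \ ⋃_{j < i} Ω j`.
-/

open MeasureTheory Set

namespace MeasureTheory

variable {X : Type*} [MeasurableSpace X]

theorem measurableSet_disjointed {ι : Type*} [Preorder ι] [LocallyFiniteOrderBot ι]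
    {s : ι → Set X} (hs : ∀ i, MeasurableSet (s i)) (i : ι) :
    MeasurableSet (disjointed s i) :=
  disjointedRec (fun _ j ht => ht.diff (hs j)) (hs i)

theorem Measure.sum_restrict_disjointed {ι : Type*} [Fintype ι] [LinearOrder ι]
    [LocallyFiniteOrderBot ι] (μ : Measure X) {s : ι → Set X} (hs : ∀ i, MeasurableSet (s i)) :
    ∑ i, μ.restrict (disjointed s i) = μ.restrict (⋃ i, s i) := by
  rw [← iUnion_disjointed, Measure.restrict_iUnion (disjoint_disjointed s)
    (measurableSet_disjointed hs), Measure.sum_fintype]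

theorem Measure.le_restrict_of_le_of_compl_eq_zero {μ ν : Measure X} {s : Set X}
    (hle : ν ≤ μ) (hs : ν sᶜ = 0) : ν ≤ μ.restrict s :=
  calc ν = ν.restrict s := (Measure.restrict_eq_self_of_ae_mem (ae_iff.2 hs)).symm
    _ ≤ μ.restrict s := Measure.restrict_mono subset_rfl hle

theorem Measure.finsetSum_compl_iUnion_eq_zero {ι : Type*} [Fintype ι] {ψ : ι → Measure X}
    {s : ι → Set X} (h : ∀ i, ψ i (s i)ᶜ = 0) : (∑ i, ψ i) (⋃ i, s i)ᶜ = 0 := by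
  rw [Measure.finsetSum_apply]
  exact Finset.sum_eq_zero fun i _ =>
    measure_mono_null (compl_subset_compl.2 (subset_iUnion s i)) (h i)

theorem Integrable.integral_finsetSum_measure {ι : Type*} [Fintype ι] {ψ : ι → Measure X}
    {f : X → ℝ} (hf : Integrable f (∑ i, ψ i)) :
    ∫ x, f x ∂(∑ i, ψ i) = ∑ i, ∫ x, f x ∂(ψ i) :=
  MeasureTheory.integral_finsetSum_measure fun i hi => integrable_finsetSum_measure.1 hf i hi

theorem Continuous.integrable_of_measure_compl_eq_zero [TopologicalSpace X] [T2Space X]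
    [OpensMeasurableSpace X] {E : Type*} [NormedAddCommGroup E] {f : X → E} (hf : Continuous f)
    {μ : Measure X} [IsFiniteMeasure μ] {K : Set X} (hK : IsCompact K) (hμK : μ Kᶜ = 0) :
    Integrable f μ := by
  have hfK : IntegrableOn f K μ := hf.continuousOn.integrableOn_compact hK
  rwa [IntegrableOn, Measure.restrict_eq_self_of_ae_mem (ae_iff.2 hμK)] at hfK

theorem eq_of_le_of_integral_eq {ν ρ : Measure X} [IsFiniteMeasure ν] {f : X → ℝ}
    (hνρ : ν ≤ ρ) (hf : Integrable f ρ) (hpos : ∀ᵐ x ∂ρ, 0 < f x)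
    (heq : ∫ x, f x ∂ν = ∫ x, f x ∂ρ) : ν = ρ := by
  have hdiff_le : ρ - ν ≤ ρ := Measure.sub_le
  have hpos' : ∀ᵐ x ∂(ρ - ν), 0 < f x := Measure.absolutelyContinuous_of_le hdiff_le hpos
  have hdiff_zero : ∫ x, f x ∂(ρ - ν) = 0 := by
    have := integral_add_measure (hf.mono_measure hdiff_le) (hf.mono_measure hνρ)
    rw [Measure.sub_add_cancel_of_le hνρ] at this
    linarith
  have hf_zero : f =ᵐ[ρ - ν] 0 := (integral_eq_zero_iff_of_nonneg_ae
    (hpos'.mono fun _ hx => hx.le) (hf.mono_measure hdiff_le)).1 hdiff_zero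
  have hfalse : ∀ᵐ _ ∂(ρ - ν), False := (hpos'.and hf_zero).mono fun _ hx => hx.1.ne' hx.2
  rw [← Measure.sub_add_cancel_of_le hνρ,
    ae_eq_bot.1 (Filter.eventually_false_iff_eq_bot.1 hfalse), zero_add]

section Admissible

variable {ι : Type*} [Fintype ι] {μ : Measure X} {Ω : ι → Set X} {f : X → ℝ}
  {ψ : ι → Measure X}

theorem sum_integral_le_integral_restrict_iUnion (hf : Integrable f μ)
    (hpos : ∀ᵐ x ∂(μ.restrict (⋃ i, Ω i)), 0 < f x) (hc : ∀ i, ψ i (Ω i)ᶜ = 0)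
    (hle : ∑ i, ψ i ≤ μ) : ∑ i, ∫ x, f x ∂(ψ i) ≤ ∫ x, f x ∂(μ.restrict (⋃ i, Ω i)) := by
  rw [← (hf.mono_measure hle).integral_finsetSum_measure]
  exact integral_mono_measure
    (Measure.le_restrict_of_le_of_compl_eq_zero hle (Measure.finsetSum_compl_iUnion_eq_zero hc))
    (hpos.mono fun _ hx => hx.le) hf.restrict

theorem sum_eq_restrict_iUnion_of_sum_integral_eq [IsFiniteMeasure μ] (hf : Integrable f μ)
    (hpos : ∀ᵐ x ∂(μ.restrict (⋃ i, Ω i)), 0 < f x) (hc : ∀ i, ψ i (Ω i)ᶜ = 0)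
    (hle : ∑ i, ψ i ≤ μ)
    (heq : ∑ i, ∫ x, f x ∂(ψ i) = ∫ x, f x ∂(μ.restrict (⋃ i, Ω i))) :
    ∑ i, ψ i = μ.restrict (⋃ i, Ω i) := by
  have := isFiniteMeasure_of_le μ hle
  rw [← (hf.mono_measure hle).integral_finsetSum_measure] at heq
  exact eq_of_le_of_integral_eq
    (Measure.le_restrict_of_le_of_compl_eq_zero hle (Measure.finsetSum_compl_iUnion_eq_zero hc))
    hf.restrict hpos heq

theorem exists_finite_sum_eq_restrict_iUnion [LinearOrder ι] [LocallyFiniteOrderBot ι]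
    (μ : Measure X) [IsFiniteMeasure μ] (hΩ : ∀ i, MeasurableSet (Ω i)) :
    ∃ φ : ι → Measure X, (∀ i, IsFiniteMeasure (φ i)) ∧ (∀ i, φ i (Ω i)ᶜ = 0) ∧
      ∑ i, φ i = μ.restrict (⋃ i, Ω i) := by
  refine ⟨fun i => μ.restrict (disjointed Ω i), fun _ => inferInstance, fun i => ?_,
    Measure.sum_restrict_disjointed μ hΩ⟩
  rw [Measure.restrict_apply' (measurableSet_disjointed hΩ i)]
  exact measure_mono_null (fun x hx => hx.1 (disjointed_subset Ω i hx.2)) measure_empty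

end Admissible

end MeasureTheory

/-- For a finite Borel measure `μ` with compact support, closed sets `Ω_i` and a
continuous `f > 0` μ-a.e. on `Ω = ⋃ Ω_i`, the problem `Q` (maximize `Σ ∫ f dφ_i` over tuples
of finite measures `φ_i` carried by `Ω_i` with `Σ φ_i ≤ μ`) has an optimal solution, its
optimal value is `∫_Ω f dμ`, and every optimal solution satisfies `Σ φ*_i = μ_Ω`. -/
theorem stmt3 {n p : ℕ} (μ : Measure (Fin n → ℝ)) [IsFiniteMeasure μ]
    (hsupp : ∃ K : Set (Fin n → ℝ), IsCompact K ∧ μ Kᶜ = 0)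
    (Ω : Fin p → Set (Fin n → ℝ)) (hΩ : ∀ i, IsClosed (Ω i))
    (f : (Fin n → ℝ) → ℝ) (hf : Continuous f)
    (hfpos : ∀ᵐ x ∂(μ.restrict (⋃ i, Ω i)), 0 < f x) :
    (∃ φ : Fin p → Measure (Fin n → ℝ),
      (∀ i, IsFiniteMeasure (φ i)) ∧ (∀ i, φ i (Ω i)ᶜ = 0) ∧ (∑ i, φ i) ≤ μ ∧
      ∀ ψ : Fin p → Measure (Fin n → ℝ),
        (∀ i, IsFiniteMeasure (ψ i)) → (∀ i, ψ i (Ω i)ᶜ = 0) → (∑ i, ψ i) ≤ μ →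
        ∑ i, ∫ x, f x ∂(ψ i) ≤ ∑ i, ∫ x, f x ∂(φ i)) ∧
    sSup {r : ℝ | ∃ φ : Fin p → Measure (Fin n → ℝ),
        (∀ i, IsFiniteMeasure (φ i)) ∧ (∀ i, φ i (Ω i)ᶜ = 0) ∧ (∑ i, φ i) ≤ μ ∧
        r = ∑ i, ∫ x, f x ∂(φ i)}
      = ∫ x, f x ∂(μ.restrict (⋃ i, Ω i)) ∧
    (∀ φ : Fin p → Measure (Fin n → ℝ),
      (∀ i, IsFiniteMeasure (φ i)) → (∀ i, φ i (Ω i)ᶜ = 0) → (∑ i, φ i) ≤ μ →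
      (∑ i, ∫ x, f x ∂(φ i)) = ∫ x, f x ∂(μ.restrict (⋃ i, Ω i)) →
      (∑ i, φ i) = μ.restrict (⋃ i, Ω i)) := by
  obtain ⟨K, hK, hμK⟩ := hsupp
  have hfμ : Integrable f μ := hf.integrable_of_measure_compl_eq_zero hK hμK
  obtain ⟨φ, hφfin, hφc, hφsum⟩ :=
    exists_finite_sum_eq_restrict_iUnion μ fun i => (hΩ i).measurableSet
  have hφle : ∑ i, φ i ≤ μ := hφsum ▸ Measure.restrict_le_self
  have hφval : ∑ i, ∫ x, f x ∂(φ i) = ∫ x, f x ∂(μ.restrict (⋃ i, Ω i)) := by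
    rw [← (hfμ.mono_measure hφle).integral_finsetSum_measure, hφsum]
  refine ⟨⟨φ, hφfin, hφc, hφle, fun ψ _ hc hle => ?_⟩, ?_,
    fun ψ _ hc hle heq => sum_eq_restrict_iUnion_of_sum_integral_eq hfμ hfpos hc hle heq⟩
  · exact hφval ▸ sum_integral_le_integral_restrict_iUnion hfμ hfpos hc hle
  · refine IsGreatest.csSup_eq ⟨⟨φ, hφfin, hφc, hφle, hφval.symm⟩, ?_⟩
    rintro r ⟨ψ, _, hc, hle, rfl⟩
    exact sum_integral_le_integral_restrict_iUnion hfμ hfpos hc hle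
end

section
/- Let μ be a Borel measure on ℝ^n with all moments z_α = ∫ x^α dμ finite and let f ∈ ℝ[x₁,…,x_n]. Then for every d ≥ max(d_0, ⌈deg(f)/2⌉): (a) ρ^f_{d+1} ≤ ρ^f_d (the optimal values of the semidefinite programs Q_d are monotone non-increasing in d); and (b) ρ^f_d ≥ ∫_Ω f dμ — indeed, the truncated moment sequences of the measures φ*_i given by φ*_i(C) = ∫_C 1_{Ω_i}(x)/|{j : x ∈ Ω_j}| dμ(x) form a feasible solution of Q_d with objective value ∫_Ω f dμ. -/
open MeasureTheory Filter

noncomputable section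

/-- Multi-indices in `ℕ^n`. -/
abbrev MIdx (n : ℕ) := Fin n → ℕ

/-- Total degree `|α|` of a multi-index. -/
def mdeg {n : ℕ} (α : MIdx n) : ℕ := ∑ i, α i

instance instFintypeMIdxLe (n d : ℕ) : Fintype {α : MIdx n // mdeg α ≤ d} :=
  Fintype.ofInjective
    (fun α => (fun i => (⟨α.1 i,
      Nat.lt_succ_of_le ((Finset.single_le_sum (f := α.1)
        (fun _ _ => Nat.zero_le _) (Finset.mem_univ i)).trans α.2)⟩ : Fin (d+1))))
    (fun a b h => Subtype.ext (funext fun i => congrArg Fin.val (congrFun h i)))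

/-- The monomial function `x ↦ x^α`. -/
def mono {n : ℕ} (α : MIdx n) (x : Fin n → ℝ) : ℝ := ∏ i, x i ^ α i

/-- The moment sequence `z_α = ∫ x^α dμ` of a measure `μ`. -/
def momSeq {n : ℕ} (μ : Measure (Fin n → ℝ)) : MIdx n → ℝ := fun α => ∫ x, mono α x ∂μ

/-- The Riesz functional `L_y(f) = Σ_γ f_γ y_γ`. -/
def riesz {n : ℕ} (y : MIdx n → ℝ) (f : MvPolynomial (Fin n) ℝ) : ℝ :=
  ∑ γ ∈ f.support, MvPolynomial.coeff γ f * y (fun i => γ i)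

/-- The moment matrix `M_d(y)`, indexed by multi-indices of degree at most `d`. -/
def momMat {n : ℕ} (d : ℕ) (y : MIdx n → ℝ) :
    Matrix {α : MIdx n // mdeg α ≤ d} {α : MIdx n // mdeg α ≤ d} ℝ :=
  fun a b => y (fun i => a.1 i + b.1 i)

/-- The localizing matrix `M_d(g y)`. -/
def locMat {n : ℕ} (d : ℕ) (g : MvPolynomial (Fin n) ℝ) (y : MIdx n → ℝ) :
    Matrix {α : MIdx n // mdeg α ≤ d} {α : MIdx n // mdeg α ≤ d} ℝ :=
  fun a b => ∑ γ ∈ g.support, MvPolynomial.coeff γ g * y (fun i => a.1 i + b.1 i + γ i)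

/-- `r = ⌈deg(g)/2⌉`. -/
def halfDegUp {n : ℕ} (g : MvPolynomial (Fin n) ℝ) : ℕ := (g.totalDegree + 1) / 2

/-- The basic closed semi-algebraic set `Ω_i = {x : g_{ij}(x) ≥ 0, j = 1,…,m_i}`. -/
def Omg {n p : ℕ} {m : Fin p → ℕ} (g : ∀ i : Fin p, Fin (m i) → MvPolynomial (Fin n) ℝ)
    (i : Fin p) : Set (Fin n → ℝ) :=
  {x | ∀ j, 0 ≤ MvPolynomial.eval x (g i j)}

/-- Feasibility for the semidefinite program `Q_d`. -/
def QdFeas {n p : ℕ} {m : Fin p → ℕ} (g : ∀ i : Fin p, Fin (m i) → MvPolynomial (Fin n) ℝ)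
    (z : MIdx n → ℝ) (d : ℕ) (y : Fin p → MIdx n → ℝ) : Prop :=
  (momMat d (fun α => z α - ∑ i, y i α)).PosSemidef ∧
  (∀ i, (momMat d (y i)).PosSemidef) ∧
  (∀ i j, (locMat (d - halfDegUp (g i j)) (g i j) (y i)).PosSemidef)

/-- The optimal value `ρ^f_d` of the semidefinite program `Q_d`. -/
def QdVal {n p : ℕ} {m : Fin p → ℕ} (g : ∀ i : Fin p, Fin (m i) → MvPolynomial (Fin n) ℝ)
    (z : MIdx n → ℝ) (f : MvPolynomial (Fin n) ℝ) (d : ℕ) : ℝ :=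
  sSup {r | ∃ y : Fin p → MIdx n → ℝ, QdFeas g z d y ∧ r = ∑ i, riesz (y i) f}

/-- Sums of squares of polynomials. -/
def IsSOS {n : ℕ} (q : MvPolynomial (Fin n) ℝ) : Prop :=
  ∃ (k : ℕ) (h : Fin k → MvPolynomial (Fin n) ℝ), q = ∑ l, (h l) ^ 2

/-- Sums of squares of polynomials of degree at most `d` (the cone `Σ[x]_d`). -/
def IsSOSdeg {n : ℕ} (d : ℕ) (q : MvPolynomial (Fin n) ℝ) : Prop :=
  ∃ (k : ℕ) (h : Fin k → MvPolynomial (Fin n) ℝ),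
    (∀ l, (h l).totalDegree ≤ d) ∧ q = ∑ l, (h l) ^ 2

/-- Membership in the quadratic module `Q(g_1,…,g_m)`. -/
def InQM {n m : ℕ} (g : Fin m → MvPolynomial (Fin n) ℝ) (q : MvPolynomial (Fin n) ℝ) : Prop :=
  ∃ σ0 : MvPolynomial (Fin n) ℝ, IsSOS σ0 ∧ ∃ σ : Fin m → MvPolynomial (Fin n) ℝ,
    (∀ j, IsSOS (σ j)) ∧ q = σ0 + ∑ j, σ j * g j

/-- The quadratic module `Q(g_1,…,g_m)` is Archimedean. -/
def IsArch {n m : ℕ} (g : Fin m → MvPolynomial (Fin n) ℝ) : Prop :=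
  ∃ M : ℝ, 0 < M ∧ InQM g (MvPolynomial.C M - ∑ i, (MvPolynomial.X i) ^ 2)

/-- The number of sets `Ω_j` containing `x`. -/
def Ncount {n p : ℕ} (Ω : Fin p → Set (Fin n → ℝ)) (x : Fin n → ℝ) : ℕ :=
  Nat.card {j : Fin p // x ∈ Ω j}

/-- The density `θ_i(x) = 1_{Ω_i}(x)/|{j : x ∈ Ω_j}|`. -/
def theta {n p : ℕ} (Ω : Fin p → Set (Fin n → ℝ)) (i : Fin p) :
    (Fin n → ℝ) → ENNReal :=
  Set.indicator (Ω i) (fun x => ((Ncount Ω x : ENNReal))⁻¹)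

end

/-!
Since `∑ i, θ_i = 𝟙_Ω`, the measures `φ*_i = θ_i μ` and `μ - ∑ i, φ*_i = 𝟙_{Ωᶜ} μ` are all
positive, and `g_ij ≥ 0` on the support of `φ*_i`. For a weight `w ≥ 0` one has
`vᵀ M_d(w μ) v = ∫ w (∑_α v_α x^α)² dμ ≥ 0` and `M_d(g (w μ)) = M_d((w g) μ)`, so the `φ*_i` are
feasible for every `Q_d`, with objective `∫_Ω f dμ`.

The matrices of `Q_d` are principal submatrices of those of `Q_{d+1}`, so feasibility descends from
`d + 1` to `d`. Comparing the suprema needs the values of `Q_d` to be bounded above: with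
`s = ∑ i, y^i` one has `0 ⪯ M_d(s) ⪯ M_d(z)`, so the `2 × 2` principal minors give
`|s_{α+β}| ≤ (z_{2α} + z_{2β}) / 2`, and every monomial of degree `≤ 2d` is some `x^{α+β}`
with `|α|, |β| ≤ d`.
-/

section

open MvPolynomial

variable {n : ℕ}

lemma mdeg_add (a b : MIdx n) : mdeg (a + b) = mdeg a + mdeg b :=
  Finset.sum_add_distrib

lemma exists_le_mdeg_eq (γ : MIdx n) {k : ℕ} (hk : k ≤ mdeg γ) : ∃ a ≤ γ, mdeg a = k := by
  induction k with
  | zero => exact ⟨0, fun i => Nat.zero_le _, by simp [mdeg]⟩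
  | succ k ih =>
    obtain ⟨a, haγ, rfl⟩ := ih (by omega)
    obtain ⟨i, hi⟩ : ∃ i, a i < γ i := by
      by_contra! h
      have : mdeg γ ≤ mdeg a := Finset.sum_le_sum fun i _ => h i
      omega
    refine ⟨a + Pi.single i 1, fun j => ?_, by rw [mdeg_add]; simp [mdeg]⟩
    rcases eq_or_ne j i with rfl | hj
    · simpa using hi
    · simpa [hj] using haγ j

lemma exists_add_eq_of_mdeg_le_two_mul {d : ℕ} (γ : MIdx n) (hγ : mdeg γ ≤ 2 * d) :
    ∃ a b : MIdx n, mdeg a ≤ d ∧ mdeg b ≤ d ∧ a + b = γ := by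
  obtain ⟨a, haγ, ha⟩ := exists_le_mdeg_eq γ (min_le_right d (mdeg γ))
  have hab : a + (γ - a) = γ := add_tsub_cancel_of_le haγ
  have hdeg := mdeg_add a (γ - a)
  rw [hab] at hdeg
  exact ⟨a, γ - a, by omega, by omega, hab⟩

lemma Matrix.PosSemidef.abs_apply_le {ι : Type*} [Fintype ι] [DecidableEq ι]
    {M : Matrix ι ι ℝ} (hM : M.PosSemidef) (a b : ι) : |M a b| ≤ (M a a + M b b) / 2 := by
  have hsymm : M b a = M a b := hM.1.apply a b
  have hquad : ∀ c : ℝ, 0 ≤ M a a + 2 * c * M a b + c ^ 2 * M b b := fun c => by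
    have := (Matrix.posSemidef_iff_dotProduct_mulVec.1 hM).2 (Pi.single a 1 + Pi.single b c)
    simp only [star_trivial, Matrix.mulVec_add, Matrix.mulVec_single, MulOpposite.op_one, one_smul,
      op_smul_eq_smul, dotProduct_add, add_dotProduct, single_dotProduct, Matrix.col_apply, one_mul,
      hsymm, dotProduct_smul, smul_eq_mul] at this
    linarith
  have h1 := hquad 1
  have h2 := hquad (-1)
  rw [abs_le]
  constructor <;> linarith

lemma mono_add (a b : MIdx n) (x : Fin n → ℝ) : mono (a + b) x = mono a x * mono b x := by
  simp [mono, pow_add, Finset.prod_mul_distrib]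

lemma eval_eq_sum_coeff_mul_mono (q : MvPolynomial (Fin n) ℝ) (x : Fin n → ℝ) :
    eval x q = ∑ γ ∈ q.support, coeff γ q * mono γ x :=
  eval_eq' x q

lemma mul_eval_mul_mono (w : ℝ) (q : MvPolynomial (Fin n) ℝ) (α : MIdx n) (x : Fin n → ℝ) :
    w * eval x q * mono α x = ∑ γ ∈ q.support, coeff γ q * (w * mono (α + ⇑γ) x) := by
  simp only [eval_eq_sum_coeff_mul_mono, mono_add, Finset.mul_sum, Finset.sum_mul]
  exact Finset.sum_congr rfl fun γ _ => by ring

lemma sum_riesz {ι : Type*} (s : Finset ι) (y : ι → MIdx n → ℝ) (f : MvPolynomial (Fin n) ℝ) :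
    ∑ i ∈ s, riesz (y i) f = riesz (fun α => ∑ i ∈ s, y i α) f := by
  simp only [riesz, Finset.mul_sum]
  exact Finset.sum_comm

noncomputable def weightedMoments (μ : Measure (Fin n → ℝ)) (w : (Fin n → ℝ) → ℝ) : MIdx n → ℝ :=
  fun α => ∫ x, w x * mono α x ∂μ

section WeightedMoments

variable {μ : Measure (Fin n → ℝ)} {w : (Fin n → ℝ) → ℝ}

lemma integrable_mul_mono_of_norm_le (hmom : ∀ α : MIdx n, Integrable (mono α) μ)
    (hw : Measurable w) {C : ℝ} (hC : ∀ x, ‖w x‖ ≤ C) (α : MIdx n) :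
    Integrable (fun x => w x * mono α x) μ :=
  (hmom α).bdd_mul hw.aestronglyMeasurable (ae_of_all _ hC)

lemma integrable_indicator_one_mul_mono (hmom : ∀ α : MIdx n, Integrable (mono α) μ)
    {s : Set (Fin n → ℝ)} (hs : MeasurableSet s) (α : MIdx n) :
    Integrable (fun x => s.indicator 1 x * mono α x) μ :=
  integrable_mul_mono_of_norm_le hmom (measurable_one.indicator hs)
    (fun x => (norm_indicator_le_norm_self 1 x).trans_eq norm_one) α

lemma sum_weightedMoments {ι : Type*} {w : ι → (Fin n → ℝ) → ℝ}
    (hw : ∀ i (α : MIdx n), Integrable (fun x => w i x * mono α x) μ) (s : Finset ι) (α : MIdx n) :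
    ∑ i ∈ s, weightedMoments μ (w i) α = weightedMoments μ (fun x => ∑ i ∈ s, w i x) α := by
  simp only [weightedMoments, Finset.sum_mul]
  exact (integral_finsetSum _ fun i _ => hw i α).symm

variable (hw : ∀ α : MIdx n, Integrable (fun x => w x * mono α x) μ)
include hw

lemma integrable_mul_eval_mul_mono (q : MvPolynomial (Fin n) ℝ) (α : MIdx n) :
    Integrable (fun x => w x * eval x q * mono α x) μ := by
  simp only [mul_eval_mul_mono]
  exact integrable_finsetSum _ fun γ _ => (hw _).const_mul _

lemma locMat_weightedMoments (d : ℕ) (q : MvPolynomial (Fin n) ℝ) :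
    locMat d q (weightedMoments μ w) = momMat d (weightedMoments μ fun x => w x * eval x q) := by
  ext a b
  change ∑ γ ∈ q.support, coeff γ q * weightedMoments μ w (a.1 + b.1 + ⇑γ)
    = weightedMoments μ (fun x => w x * eval x q) (a.1 + b.1)
  simp only [weightedMoments]
  rw [integral_congr_ae (ae_of_all _ fun x => mul_eval_mul_mono (w x) q (a.1 + b.1) x),
    integral_finsetSum _ fun γ _ => (hw _).const_mul _]
  exact Finset.sum_congr rfl fun γ _ => (integral_const_mul _ _).symm

lemma riesz_weightedMoments (q : MvPolynomial (Fin n) ℝ) :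
    riesz (weightedMoments μ w) q = ∫ x, w x * eval x q ∂μ := by
  simp only [eval_eq_sum_coeff_mul_mono, Finset.mul_sum]
  rw [integral_finsetSum _ fun γ _ => ((hw _).const_mul (coeff γ q)).congr
    (ae_of_all _ fun x => by ring)]
  exact Finset.sum_congr rfl fun γ _ => by
    rw [weightedMoments, ← integral_const_mul]
    exact integral_congr_ae (ae_of_all _ fun x => by ring)

lemma momSeq_sub_weightedMoments (hmom : ∀ α : MIdx n, Integrable (mono α) μ) (α : MIdx n) :
    momSeq μ α - weightedMoments μ w α = weightedMoments μ (fun x => 1 - w x) α := by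
  simp only [momSeq, weightedMoments, sub_mul, one_mul]
  exact (integral_sub (hmom α) (hw α)).symm

lemma dotProduct_mulVec_momMat_weightedMoments {d : ℕ} (v : {α : MIdx n // mdeg α ≤ d} → ℝ) :
    star v ⬝ᵥ (momMat d (weightedMoments μ w)).mulVec v
      = ∫ x, w x * (∑ a, v a * mono a.1 x) ^ 2 ∂μ := by
  have hexpand : ∀ x, w x * (∑ a, v a * mono a.1 x) ^ 2
      = ∑ a, ∑ b, v a * v b * (w x * mono (a.1 + b.1) x) := fun x => by
    rw [sq, Finset.sum_mul_sum]
    simp only [Finset.mul_sum]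
    exact Finset.sum_congr rfl fun a _ => Finset.sum_congr rfl fun b _ => by
      rw [mono_add]; ring
  simp only [hexpand]
  rw [integral_finsetSum _ fun a _ => integrable_finsetSum _ fun b _ => (hw _).const_mul _]
  refine Finset.sum_congr rfl fun a _ => ?_
  rw [integral_finsetSum _ fun b _ => (hw _).const_mul _]
  simp only [Matrix.mulVec, dotProduct, star_trivial, Finset.mul_sum]
  refine Finset.sum_congr rfl fun b _ => ?_
  rw [integral_const_mul]
  change v a * (weightedMoments μ w (a.1 + b.1) * v b) = _
  rw [weightedMoments]
  ring

lemma posSemidef_momMat_weightedMoments (hw0 : ∀ x, 0 ≤ w x) (d : ℕ) :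
    (momMat d (weightedMoments μ w)).PosSemidef := by
  refine Matrix.posSemidef_iff_dotProduct_mulVec.2 ⟨?_, fun v => ?_⟩
  · ext a b
    simp [momMat, add_comm]
  · rw [dotProduct_mulVec_momMat_weightedMoments hw]
    exact integral_nonneg fun x => mul_nonneg (hw0 x) (sq_nonneg _)

lemma posSemidef_locMat_weightedMoments {q : MvPolynomial (Fin n) ℝ}
    (hwq : ∀ x, 0 ≤ w x * eval x q) (d : ℕ) : (locMat d q (weightedMoments μ w)).PosSemidef := by
  rw [locMat_weightedMoments hw]
  exact posSemidef_momMat_weightedMoments (integrable_mul_eval_mul_mono hw q) hwq d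

end WeightedMoments

section Theta

variable {p : ℕ} {Ω : Fin p → Set (Fin n → ℝ)}

lemma ncount_pos {i : Fin p} {x : Fin n → ℝ} (hx : x ∈ Ω i) : 0 < Ncount Ω x :=
  have : Nonempty {j // x ∈ Ω j} := ⟨⟨i, hx⟩⟩
  Nat.card_pos

lemma ncount_eq_sum_ite [∀ j x, Decidable (x ∈ Ω j)] (x : Fin n → ℝ) :
    Ncount Ω x = ∑ j, if x ∈ Ω j then 1 else 0 := by
  simp [Ncount, Nat.card_eq_fintype_card, Fintype.card_subtype]

lemma measurable_theta (hΩ : ∀ i, MeasurableSet (Ω i)) (i : Fin p) : Measurable (theta Ω i) := by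
  classical
  have hN : Measurable (Ncount Ω) := by
    rw [_root_.funext ncount_eq_sum_ite]
    exact Finset.measurable_sum _ fun j _ => Measurable.ite (hΩ j) measurable_const measurable_const
  exact ((measurable_from_nat (f := fun k : ℕ => (k : ENNReal)⁻¹)).comp hN).indicator (hΩ i)

lemma theta_lt_top (Ω : Fin p → Set (Fin n → ℝ)) (i : Fin p) (x : Fin n → ℝ) :
    theta Ω i x < ⊤ := by
  by_cases hx : x ∈ Ω i
  · simpa [theta, hx] using ncount_pos hx
  · simp [theta, hx]

lemma sum_theta_toReal (Ω : Fin p → Set (Fin n → ℝ)) (x : Fin n → ℝ) :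
    ∑ i, (theta Ω i x).toReal = (⋃ i, Ω i).indicator 1 x := by
  classical
  by_cases hx : x ∈ ⋃ i, Ω i
  · obtain ⟨i, hi⟩ := Set.mem_iUnion.1 hx
    have hN : (Ncount Ω x : ℝ) ≠ 0 := by exact_mod_cast (ncount_pos hi).ne'
    have hterm : ∀ j, (theta Ω j x).toReal
        = ((if x ∈ Ω j then 1 else 0 : ℕ) : ℝ) * (Ncount Ω x : ℝ)⁻¹ := fun j => by
      by_cases hj : x ∈ Ω j <;> simp [theta, hj]
    rw [Finset.sum_congr rfl fun j _ => hterm j, ← Finset.sum_mul, ← Nat.cast_sum,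
      ← ncount_eq_sum_ite, mul_inv_cancel₀ hN, Set.indicator_of_mem hx, Pi.one_apply]
  · have : ∀ i, x ∉ Ω i := fun i h => hx (Set.mem_iUnion.2 ⟨i, h⟩)
    simp [theta, this, hx]

lemma theta_toReal_le_one (Ω : Fin p → Set (Fin n → ℝ)) (i : Fin p) (x : Fin n → ℝ) :
    (theta Ω i x).toReal ≤ 1 :=
  calc (theta Ω i x).toReal ≤ ∑ j, (theta Ω j x).toReal :=
        Finset.single_le_sum (f := fun j => (theta Ω j x).toReal)
          (fun _ _ => ENNReal.toReal_nonneg) (Finset.mem_univ i)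
    _ = (⋃ j, Ω j).indicator 1 x := sum_theta_toReal Ω x
    _ ≤ 1 := Set.indicator_le_self' (fun _ _ => zero_le_one) x

lemma integral_withDensity_theta (μ : Measure (Fin n → ℝ)) (hΩ : ∀ i, MeasurableSet (Ω i))
    (i : Fin p) (h : (Fin n → ℝ) → ℝ) :
    ∫ x, h x ∂μ.withDensity (theta Ω i) = ∫ x, (theta Ω i x).toReal * h x ∂μ :=
  integral_withDensity_eq_integral_toReal_smul (measurable_theta hΩ i)
    (ae_of_all _ (theta_lt_top Ω i)) h

end Theta

lemma mdeg_le_totalDegree {q : MvPolynomial (Fin n) ℝ} {γ : Fin n →₀ ℕ} (hγ : γ ∈ q.support) :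
    mdeg γ ≤ q.totalDegree := by
  rw [mdeg, ← Finsupp.sum_fintype γ (fun _ e => e) fun _ => rfl]
  exact le_totalDegree hγ

lemma abs_le_of_posSemidef_momMat {d : ℕ} {s z : MIdx n → ℝ} (hs : (momMat d s).PosSemidef)
    (hzs : (momMat d fun α => z α - s α).PosSemidef) {a b : MIdx n} (ha : mdeg a ≤ d)
    (hb : mdeg b ≤ d) : |s (a + b)| ≤ (z (a + a) + z (b + b)) / 2 := by
  have hab : |s (a + b)| ≤ (s (a + a) + s (b + b)) / 2 := hs.abs_apply_le ⟨a, ha⟩ ⟨b, hb⟩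
  have hza : 0 ≤ z (a + a) - s (a + a) := hzs.diag_nonneg (i := ⟨a, ha⟩)
  have hzb : 0 ≤ z (b + b) - s (b + b) := hzs.diag_nonneg (i := ⟨b, hb⟩)
  linarith

lemma bddAbove_riesz_of_posSemidef_momMat (z : MIdx n → ℝ) {f : MvPolynomial (Fin n) ℝ} {d : ℕ}
    (hf : f.totalDegree ≤ 2 * d) :
    BddAbove ((fun s => riesz s f) ''
      {s | (momMat d s).PosSemidef ∧ (momMat d fun α => z α - s α).PosSemidef}) := by
  have hsplit : ∀ γ : MIdx n, ∃ ab : MIdx n × MIdx n,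
      mdeg γ ≤ 2 * d → mdeg ab.1 ≤ d ∧ mdeg ab.2 ≤ d ∧ ab.1 + ab.2 = γ := fun γ => by
    by_cases hγ : mdeg γ ≤ 2 * d
    · obtain ⟨a, b, hab⟩ := exists_add_eq_of_mdeg_le_two_mul γ hγ
      exact ⟨(a, b), fun _ => hab⟩
    · exact ⟨0, fun h => absurd h hγ⟩
  choose ab hab using hsplit
  refine ⟨∑ γ ∈ f.support,
    |coeff γ f| * ((z ((ab γ).1 + (ab γ).1) + z ((ab γ).2 + (ab γ).2)) / 2), ?_⟩
  rintro _ ⟨s, ⟨hs, hzs⟩, rfl⟩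
  refine Finset.sum_le_sum fun γ hγ => ?_
  obtain ⟨ha, hb, hsum⟩ := hab γ ((mdeg_le_totalDegree hγ).trans hf)
  calc coeff γ f * s γ ≤ |coeff γ f| * |s γ| := (le_abs_self _).trans (abs_mul _ _).le
    _ ≤ _ := by
      have hbound := abs_le_of_posSemidef_momMat hs hzs ha hb
      rw [hsum] at hbound
      exact mul_le_mul_of_nonneg_left hbound (abs_nonneg _)

section Relaxation

variable {p : ℕ} {m : Fin p → ℕ} {g : ∀ i : Fin p, Fin (m i) → MvPolynomial (Fin n) ℝ}
  {z : MIdx n → ℝ} {d : ℕ} {y : Fin p → MIdx n → ℝ}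

theorem QdFeas.mono {d' : ℕ} (h : QdFeas g z d' y) (hd : d ≤ d') : QdFeas g z d y := by
  let incl {k k' : ℕ} (hk : k ≤ k') (a : {α : MIdx n // mdeg α ≤ k}) :
      {α : MIdx n // mdeg α ≤ k'} := ⟨a.1, a.2.trans hk⟩
  obtain ⟨hz, hy, hloc⟩ := h
  exact ⟨hz.submatrix (incl hd), fun i => (hy i).submatrix (incl hd),
    fun i j => (hloc i j).submatrix (incl (Nat.sub_le_sub_right hd _))⟩

theorem QdFeas.posSemidef_momMat_sum (h : QdFeas g z d y) :
    (momMat d fun α => ∑ i, y i α).PosSemidef := by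
  have hsum : momMat d (fun α => ∑ i, y i α) = ∑ i, momMat d (y i) := by
    ext a b
    simp [momMat, Matrix.sum_apply]
  rw [hsum]
  exact Matrix.posSemidef_sum _ fun i _ => h.2.1 i

variable (g z) in
lemma bddAbove_qdValues {f : MvPolynomial (Fin n) ℝ} (hf : f.totalDegree ≤ 2 * d) :
    BddAbove {r | ∃ y, QdFeas g z d y ∧ r = ∑ i, riesz (y i) f} :=
  (bddAbove_riesz_of_posSemidef_momMat z hf).mono <| by
    rintro _ ⟨y, hy, rfl⟩
    exact ⟨_, ⟨hy.posSemidef_momMat_sum, hy.1⟩, (sum_riesz _ y f).symm⟩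

end Relaxation

section Partition

variable {μ : Measure (Fin n → ℝ)} {p : ℕ} {Ω : Fin p → Set (Fin n → ℝ)}
  (hΩ : ∀ i, MeasurableSet (Ω i)) (hmom : ∀ α : MIdx n, Integrable (mono α) μ)

include hΩ

lemma moments_withDensity_theta (i : Fin p) :
    (fun α => ∫ x, mono α x ∂μ.withDensity (theta Ω i))
      = weightedMoments μ fun x => (theta Ω i x).toReal :=
  funext fun α => integral_withDensity_theta μ hΩ i (mono α)

include hmom

lemma integrable_theta_toReal_mul_mono (i : Fin p) (α : MIdx n) :
    Integrable (fun x => (theta Ω i x).toReal * mono α x) μ :=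
  integrable_mul_mono_of_norm_le hmom (measurable_theta hΩ i).ennreal_toReal
    (fun x => (Real.norm_of_nonneg ENNReal.toReal_nonneg).trans_le (theta_toReal_le_one Ω i x)) α

lemma sum_moments_withDensity_theta (α : MIdx n) :
    ∑ i, ∫ x, mono α x ∂μ.withDensity (theta Ω i)
      = weightedMoments μ ((⋃ i, Ω i).indicator 1) α := by
  simp only [fun i => congrFun (moments_withDensity_theta hΩ (μ := μ) i) α,
    sum_weightedMoments (integrable_theta_toReal_mul_mono hΩ hmom), sum_theta_toReal]

lemma sum_riesz_withDensity_theta (f : MvPolynomial (Fin n) ℝ) :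
    ∑ i, riesz (fun α => ∫ x, mono α x ∂μ.withDensity (theta Ω i)) f
      = ∫ x, eval x f ∂μ.restrict (⋃ i, Ω i) := by
  have hU := MeasurableSet.iUnion hΩ
  rw [sum_riesz, funext (sum_moments_withDensity_theta hΩ hmom),
    riesz_weightedMoments (integrable_indicator_one_mul_mono hmom hU), ← integral_indicator hU]
  congr 1 with x
  by_cases hx : x ∈ ⋃ i, Ω i <;> simp [hx]

end Partition

variable {p : ℕ} {m : Fin p → ℕ}

lemma measurableSet_omg (g : ∀ i : Fin p, Fin (m i) → MvPolynomial (Fin n) ℝ) (i : Fin p) :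
    MeasurableSet (Omg g i) := by
  simp only [Omg, Set.ofPred_forall]
  exact MeasurableSet.iInter fun j =>
    measurableSet_le measurable_const (continuous_eval _).measurable

theorem qdFeas_withDensity_theta (g : ∀ i : Fin p, Fin (m i) → MvPolynomial (Fin n) ℝ)
    {μ : Measure (Fin n → ℝ)} (hmom : ∀ α : MIdx n, Integrable (mono α) μ) (d : ℕ) :
    QdFeas g (momSeq μ) d fun i α => ∫ x, mono α x ∂μ.withDensity (theta (Omg g) i) := by
  have hΩ := measurableSet_omg g
  have hU := MeasurableSet.iUnion hΩ
  have hθ := integrable_theta_toReal_mul_mono hΩ hmom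
  refine ⟨?_, fun i => ?_, fun i j => ?_⟩
  · have hcompl : (fun α => momSeq μ α - ∑ i, ∫ x, mono α x ∂μ.withDensity (theta (Omg g) i))
        = weightedMoments μ ((⋃ i, Omg g i)ᶜ.indicator 1) := funext fun α => by
      rw [sum_moments_withDensity_theta hΩ hmom,
        momSeq_sub_weightedMoments (integrable_indicator_one_mul_mono hmom hU) hmom,
        Set.indicator_compl]
      rfl
    rw [hcompl]
    exact posSemidef_momMat_weightedMoments (integrable_indicator_one_mul_mono hmom hU.compl)
      (Set.indicator_nonneg fun _ _ => zero_le_one) d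
  · dsimp only
    rw [moments_withDensity_theta hΩ]
    exact posSemidef_momMat_weightedMoments (hθ i) (fun _ => ENNReal.toReal_nonneg) d
  · dsimp only
    rw [moments_withDensity_theta hΩ]
    refine posSemidef_locMat_weightedMoments (hθ i) (fun x => ?_) _
    by_cases hx : x ∈ Omg g i
    · exact mul_nonneg ENNReal.toReal_nonneg (hx j)
    · simp [theta, hx]

end

open MvPolynomial in
theorem stmt4_general {n p : ℕ} {m : Fin p → ℕ}
    (g : ∀ i : Fin p, Fin (m i) → MvPolynomial (Fin n) ℝ)
    (μ : Measure (Fin n → ℝ))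
    (hmom : ∀ α : MIdx n, Integrable (mono α) μ)
    (f : MvPolynomial (Fin n) ℝ)
    (d : ℕ)
    (hd2 : (f.totalDegree + 1) / 2 ≤ d) :
    (QdFeas g (momSeq μ) d
        (fun i α => ∫ x, mono α x ∂(μ.withDensity (theta (Omg g) i))) ∧
      (∑ i, riesz (fun α => ∫ x, mono α x ∂(μ.withDensity (theta (Omg g) i))) f)
        = ∫ x, MvPolynomial.eval x f ∂(μ.restrict (⋃ i, Omg g i))) ∧
    QdVal g (momSeq μ) f (d + 1) ≤ QdVal g (momSeq μ) f d ∧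
    ∫ x, MvPolynomial.eval x f ∂(μ.restrict (⋃ i, Omg g i)) ≤ QdVal g (momSeq μ) f d := by
  have hfeas := qdFeas_withDensity_theta g hmom
  have hobj := sum_riesz_withDensity_theta (measurableSet_omg g) hmom f
  have hbdd := bddAbove_qdValues g (momSeq μ) (f := f) (d := d) (by omega)
  refine ⟨⟨hfeas d, hobj⟩, csSup_le_csSup hbdd ⟨_, _, hfeas (d + 1), rfl⟩ ?_,
    hobj ▸ le_csSup hbdd ⟨_, hfeas d, rfl⟩⟩
  rintro r ⟨y, hy, rfl⟩
  exact ⟨y, hy.mono d.le_succ, rfl⟩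

open MvPolynomial in
/-- For `μ` with all moments finite and `d ≥ max(d_0, ⌈deg f/2⌉)`:
(b) the truncated moment sequences of the measures `φ*_i = θ_i·μ` form a feasible solution of
`Q_d` with objective value `∫_Ω f dμ`, hence `ρ^f_d ≥ ∫_Ω f dμ`; (a) `ρ^f_{d+1} ≤ ρ^f_d`. -/
theorem stmt4 {n p : ℕ} {m : Fin p → ℕ}
    (g : ∀ i : Fin p, Fin (m i) → MvPolynomial (Fin n) ℝ)
    (μ : Measure (Fin n → ℝ))
    (hmom : ∀ α : MIdx n, Integrable (mono α) μ)
    (f : MvPolynomial (Fin n) ℝ)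
    (d : ℕ)
    (hd1 : ∀ i j, halfDegUp (g i j) ≤ d)
    (hd2 : (f.totalDegree + 1) / 2 ≤ d) :
    (QdFeas g (momSeq μ) d
        (fun i α => ∫ x, mono α x ∂(μ.withDensity (theta (Omg g) i))) ∧
      (∑ i, riesz (fun α => ∫ x, mono α x ∂(μ.withDensity (theta (Omg g) i))) f)
        = ∫ x, MvPolynomial.eval x f ∂(μ.restrict (⋃ i, Omg g i))) ∧
    QdVal g (momSeq μ) f (d + 1) ≤ QdVal g (momSeq μ) f d ∧
    ∫ x, MvPolynomial.eval x f ∂(μ.restrict (⋃ i, Omg g i)) ≤ QdVal g (momSeq μ) f d :=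
  stmt4_general g μ hmom f d hd2
end
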